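/- Let x_k ∈ J_k = [(k-1)h, kh] for k = 1,…,N with h = L/N. Then for every φ ∈ H¹(0,L) one has ‖φ‖²_{L²(0,L)} ≤ 2 [ h ∑_{k=1}^N |φ(x_k)|² + h² ‖φ'‖²_{L²(0,L)} ]. -/

import Mathlib

open MeasureTheory Finset

/-! On a cell `[a, b]` containing `x₀`, the fundamental theorem of calculus bounds
`|φ y - φ x₀|` by `∫ₐᵇ |φ'|`, and Cauchy–Schwarz bounds the square of that by `(b - a) ∫ₐᵇ φ'²`.
Hence `φ y ² ≤ 2 φ x₀ ² + 2 (b - a) ∫ₐᵇ φ'²` on the cell; integrating over the cell and summing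
over the `N` cells of length `h` gives the estimate. -/

theorem sq_integral_le_measureReal_mul_integral_sq {α : Type*} [MeasurableSpace α]
    {μ : Measure α} [IsFiniteMeasure μ] {f : α → ℝ} (hf : Integrable f μ)
    (hf2 : Integrable (fun x => f x ^ 2) μ) :
    (∫ x, f x ∂μ) ^ 2 ≤ μ.real Set.univ * ∫ x, f x ^ 2 ∂μ := by
  rcases eq_zero_or_neZero μ with rfl | _
  · simp
  have hm : 0 < μ.real Set.univ := measureReal_univ_pos
  have jensen := (even_two.convexOn_pow (𝕜 := ℝ)).map_average_le (continuous_pow 2).continuousOn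
    isClosed_univ (ae_of_all μ fun x => Set.mem_univ (f x)) hf hf2
  simp only [average_eq, smul_eq_mul] at jensen
  calc (∫ x, f x ∂μ) ^ 2 = μ.real Set.univ ^ 2 * ((μ.real Set.univ)⁻¹ * ∫ x, f x ∂μ) ^ 2 := by
        field_simp
    _ ≤ μ.real Set.univ ^ 2 * ((μ.real Set.univ)⁻¹ * ∫ x, f x ^ 2 ∂μ) := by gcongr
    _ = μ.real Set.univ * ∫ x, f x ^ 2 ∂μ := by field_simp

theorem sq_intervalIntegral_le {f : ℝ → ℝ} {a b : ℝ} (hab : a ≤ b)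
    (hf : IntervalIntegrable f volume a b)
    (hf2 : IntervalIntegrable (fun x => f x ^ 2) volume a b) :
    (∫ x in a..b, f x) ^ 2 ≤ (b - a) * ∫ x in a..b, f x ^ 2 := by
  have hcs := sq_integral_le_measureReal_mul_integral_sq hf.1 hf2.1
  rwa [measureReal_restrict_apply_univ, Real.volume_real_Ioc_of_le hab,
    ← intervalIntegral.integral_of_le hab, ← intervalIntegral.integral_of_le hab] at hcs

theorem IntervalIntegrable.of_sq {f : ℝ → ℝ} {a b : ℝ}
    (hf : AEStronglyMeasurable f (volume.restrict (Set.uIoc a b)))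
    (hf2 : IntervalIntegrable (fun x => f x ^ 2) volume a b) : IntervalIntegrable f volume a b := by
  have : IsFiniteMeasure (volume.restrict (Set.uIoc a b)) :=
    inferInstanceAs (IsFiniteMeasure (volume.restrict (Set.Ioc (min a b) (max a b))))
  exact intervalIntegrable_iff.2 <|
    ((memLp_two_iff_integrable_sq hf).2 (intervalIntegrable_iff.1 hf2)).integrable one_le_two

theorem abs_sub_le_intervalIntegral_abs_deriv {φ φ' : ℝ → ℝ} {a b x y : ℝ}
    (hx : x ∈ Set.Icc a b) (hy : y ∈ Set.Icc a b)
    (hderiv : ∀ t ∈ Set.Icc a b, HasDerivAt φ (φ' t) t)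
    (hφ' : IntervalIntegrable φ' volume a b) :
    |φ y - φ x| ≤ ∫ t in a..b, |φ' t| := by
  wlog hxy : x ≤ y generalizing x y
  · rw [abs_sub_comm]
    exact this hy hx (le_of_not_ge hxy)
  have hsub : Set.uIcc x y ⊆ Set.uIcc a b := Set.uIcc_subset_uIcc
    (Set.Icc_subset_uIcc hx) (Set.Icc_subset_uIcc hy)
  rw [← intervalIntegral.integral_eq_sub_of_hasDerivAt
    (fun t ht => hderiv t (Set.uIcc_of_le (hx.1.trans hx.2) ▸ hsub ht)) (hφ'.mono_set hsub)]
  exact (intervalIntegral.abs_integral_le_integral_abs hxy).trans <|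
    intervalIntegral.integral_mono_interval hx.1 hxy hy.2
      (ae_of_all _ fun t => abs_nonneg (φ' t)) hφ'.abs

theorem intervalIntegral_sq_le_of_hasDerivAt {φ φ' : ℝ → ℝ} {a b x₀ : ℝ}
    (hx₀ : x₀ ∈ Set.Icc a b) (hderiv : ∀ y ∈ Set.Icc a b, HasDerivAt φ (φ' y) y)
    (hφ' : IntervalIntegrable (fun y => φ' y ^ 2) volume a b) :
    ∫ y in a..b, φ y ^ 2 ≤ 2 * (b - a) * φ x₀ ^ 2 + 2 * (b - a) ^ 2 * ∫ y in a..b, φ' y ^ 2 := by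
  have hab : a ≤ b := hx₀.1.trans hx₀.2
  have hcont : ContinuousOn φ (Set.Icc a b) := fun y hy =>
    (hderiv y hy).continuousAt.continuousWithinAt
  have hmeas : AEStronglyMeasurable φ' (volume.restrict (Set.uIoc a b)) :=
    (measurable_deriv φ).aestronglyMeasurable.congr <| (ae_restrict_iff' measurableSet_uIoc).2 <|
      ae_of_all _ fun y hy => (hderiv y (Set.Ioc_subset_Icc_self (Set.uIoc_of_le hab ▸ hy))).deriv
  have hφ'₁ : IntervalIntegrable φ' volume a b := .of_sq hmeas hφ'
  set M := ∫ t in a..b, |φ' t|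
  have hM : M ^ 2 ≤ (b - a) * ∫ y in a..b, φ' y ^ 2 := by
    simpa only [sq_abs] using sq_intervalIntegral_le hab hφ'₁.abs (by simpa only [sq_abs] using hφ')
  have hpt : ∀ y ∈ Set.Icc a b, φ y ^ 2 ≤ 2 * φ x₀ ^ 2 + 2 * M ^ 2 := by
    intro y hy
    obtain ⟨hlo, hhi⟩ := abs_le.1 (abs_sub_le_intervalIntegral_abs_deriv hx₀ hy hderiv hφ'₁)
    have hdiff : (φ y - φ x₀) ^ 2 ≤ M ^ 2 := sq_le_sq' hlo hhi
    nlinarith [sq_nonneg (φ y - 2 * φ x₀)]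
  calc ∫ y in a..b, φ y ^ 2 ≤ ∫ _ in a..b, (2 * φ x₀ ^ 2 + 2 * M ^ 2) :=
        intervalIntegral.integral_mono_on hab ((hcont.pow 2).intervalIntegrable_of_Icc hab)
          intervalIntegrable_const hpt
    _ = 2 * (b - a) * φ x₀ ^ 2 + (b - a) * 2 * M ^ 2 := by
        rw [intervalIntegral.integral_const, smul_eq_mul]; ring
    _ ≤ 2 * (b - a) * φ x₀ ^ 2 + 2 * (b - a) ^ 2 * ∫ y in a..b, φ' y ^ 2 := by
        nlinarith [mul_le_mul_of_nonneg_left hM (sub_nonneg.2 hab)]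

theorem Icc_cell_subset_Icc {h : ℝ} (hh : 0 ≤ h) {k N : ℕ} (hk : k < N) :
    Set.Icc ((k : ℝ) * h) ((k + 1) * h) ⊆ Set.Icc 0 (N * h) := by
  have hkN : (k : ℝ) + 1 ≤ N := by exact_mod_cast hk
  exact Set.Icc_subset_Icc (by positivity) (by gcongr)

theorem intervalIntegrable_cell {f : ℝ → ℝ} {h : ℝ} (hh : 0 ≤ h) {k N : ℕ} (hk : k < N)
    (hf : IntervalIntegrable f volume 0 (N * h)) :
    IntervalIntegrable f volume (k * h) ((k + 1) * h) :=
  hf.mono_set <| by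
    rw [Set.uIcc_of_le (by gcongr; simp), Set.uIcc_of_le (by positivity)]
    exact Icc_cell_subset_Icc hh hk

theorem intervalIntegral_eq_sum_uniform_grid {f : ℝ → ℝ} {h : ℝ} (hh : 0 ≤ h) (N : ℕ)
    (hf : IntervalIntegrable f volume 0 (N * h)) :
    ∫ y in 0..N * h, f y = ∑ k ∈ range N, ∫ y in k * h..(k + 1) * h, f y := by
  have hcells := intervalIntegral.sum_integral_adjacent_intervals (a := fun k : ℕ => (k : ℝ) * h)
    fun k hk => by simpa using intervalIntegrable_cell hh hk hf
  simpa using hcells.symm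

theorem intervalIntegral_sq_le_nodal_sum {φ φ' : ℝ → ℝ} {h : ℝ} (hh : 0 ≤ h) (N : ℕ)
    {x : ℕ → ℝ} (hx : ∀ k < N, x k ∈ Set.Icc ((k : ℝ) * h) ((k + 1) * h))
    (hderiv : ∀ y ∈ Set.Icc 0 (N * h), HasDerivAt φ (φ' y) y)
    (hφ' : IntervalIntegrable (fun y => φ' y ^ 2) volume 0 (N * h)) :
    ∫ y in 0..N * h, φ y ^ 2 ≤
      2 * (h * ∑ k ∈ range N, φ (x k) ^ 2 + h ^ 2 * ∫ y in 0..N * h, φ' y ^ 2) := by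
  have hφ : IntervalIntegrable (fun y => φ y ^ 2) volume 0 (N * h) :=
    ((HasDerivAt.continuousOn hderiv).pow 2).intervalIntegrable_of_Icc (by positivity)
  have hcell (k : ℕ) (hk : k ∈ range N) : ∫ y in k * h..(k + 1) * h, φ y ^ 2 ≤
      2 * h * φ (x k) ^ 2 + 2 * h ^ 2 * ∫ y in k * h..(k + 1) * h, φ' y ^ 2 := by
    rw [mem_range] at hk
    simpa [add_mul] using intervalIntegral_sq_le_of_hasDerivAt (hx k hk)
      (fun y hy => hderiv y (Icc_cell_subset_Icc hh hk hy)) (intervalIntegrable_cell hh hk hφ')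
  calc ∫ y in 0..N * h, φ y ^ 2 = ∑ k ∈ range N, ∫ y in k * h..(k + 1) * h, φ y ^ 2 :=
        intervalIntegral_eq_sum_uniform_grid hh N hφ
    _ ≤ ∑ k ∈ range N,
          (2 * h * φ (x k) ^ 2 + 2 * h ^ 2 * ∫ y in k * h..(k + 1) * h, φ' y ^ 2) :=
        sum_le_sum hcell
    _ = _ := by
        rw [intervalIntegral_eq_sum_uniform_grid hh N hφ', sum_add_distrib, ← mul_sum, ← mul_sum]
        ring

theorem sum_Icc_one_eq_sum_range_succ {M : Type*} [AddCommMonoid M] (f : ℕ → M) (N : ℕ) :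
    ∑ k ∈ Icc 1 N, f k = ∑ k ∈ range N, f (k + 1) := by
  rw [← Finset.Ico_add_one_right_eq_Icc, sum_Ico_eq_sum_range]
  simp [add_comm]

theorem nodal_norm_bound_general
    (L : ℝ) (hL : 0 < L) (N : ℕ) (hN : 0 < N)
    (h : ℝ) (hh : h = L / N)
    (x : ℕ → ℝ)
    (hx : ∀ k ∈ Finset.Icc 1 N, x k ∈ Set.Icc (((k : ℝ) - 1) * h) ((k : ℝ) * h))
    (φ φ' : ℝ → ℝ)
    (hderiv : ∀ y ∈ Set.Icc (0:ℝ) L, HasDerivAt φ (φ' y) y)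
    (hφ' : IntegrableOn (fun y => (φ' y) ^ 2) (Set.Ioo 0 L)) :
    (∫ y in Set.Ioo (0:ℝ) L, (φ y) ^ 2) ≤
      2 * (h * ∑ k ∈ Finset.Icc 1 N, (φ (x k)) ^ 2 +
        h ^ 2 * ∫ y in Set.Ioo (0:ℝ) L, (φ' y) ^ 2) := by
  have hNh : (N : ℝ) * h = L := by rw [hh]; field_simp
  have hIoo (f : ℝ → ℝ) : ∫ y in Set.Ioo 0 L, f y = ∫ y in 0..N * h, f y := by
    rw [hNh, intervalIntegral.integral_of_le hL.le, integral_Ioc_eq_integral_Ioo]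
  have hnodes : ∀ k < N, x (k + 1) ∈ Set.Icc ((k : ℝ) * h) ((k + 1) * h) := fun k hk => by
    simpa using hx (k + 1) (mem_Icc.2 ⟨Nat.le_add_left 1 k, hk⟩)
  have hφ'₀ : IntervalIntegrable (fun y => φ' y ^ 2) volume 0 (N * h) :=
    hNh ▸ (intervalIntegrable_iff_integrableOn_Ioo_of_le hL.le).2 hφ'
  rw [hIoo, hIoo, sum_Icc_one_eq_sum_range_succ]
  exact intervalIntegral_sq_le_nodal_sum (hh ▸ by positivity) N hnodes (hNh ▸ hderiv) hφ'₀

/-- Lemma 4.1 (ii): nodal-values lower bound for the L² norm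
  ‖φ‖² ≤ 2 [ h ∑ |φ(x_k)|² + h² ‖φ'‖² ]. -/
theorem nodal_norm_bound
    (L : ℝ) (hL : 0 < L) (N : ℕ) (hN : 0 < N)
    (h : ℝ) (hh : h = L / N)
    (x : ℕ → ℝ)
    (hx : ∀ k ∈ Finset.Icc 1 N, x k ∈ Set.Icc (((k : ℝ) - 1) * h) ((k : ℝ) * h))
    (φ φ' : ℝ → ℝ)
    (hderiv : ∀ y ∈ Set.Icc (0:ℝ) L, HasDerivAt φ (φ' y) y)
    (hφ : IntegrableOn (fun y => (φ y) ^ 2) (Set.Ioo 0 L))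
    (hφ' : IntegrableOn (fun y => (φ' y) ^ 2) (Set.Ioo 0 L)) :
    (∫ y in Set.Ioo (0:ℝ) L, (φ y) ^ 2) ≤
      2 * (h * ∑ k ∈ Finset.Icc 1 N, (φ (x k)) ^ 2 +
        h ^ 2 * ∫ y in Set.Ioo (0:ℝ) L, (φ' y) ^ 2) :=
  nodal_norm_bound_general L hL N hN h hh x hx φ φ' hderiv hφ'
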